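/- In the deterministic election model with exactly two candidates c_0, c_1, suppose every seed's message m_s satisfies m_s(0) ≥ 0 and m_s(1) ≤ 0 (i.e., every message is weakly favorable to c_0). Then MoV is monotone in the added edge set: for all edge sets F_1 ⊆ F_2 over the voters, MoV(S,M,E∪F_1) ≤ MoV(S,M,E∪F_2). In particular, with unlimited budget, adding all possible edges maximizes ΔMoV^+. -/

import Mathlib

open scoped Classical

noncomputable section

/-- `v` is reachable from `s` through the edge set `Es` (every node reaches itself). -/
def Reaches {V : Type*} (Es : Set (V × V)) (s v : V) : Prop :=
  Relation.ReflTransGen (fun a b => (a, b) ∈ Es) s v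

/-- The set of influenced voters: those reachable from some seed in `S`. -/
def influenced {V : Type*} [Fintype V] (Es : Set (V × V)) (S : Set V) : Finset V :=
  Finset.univ.filter (fun v => ∃ s ∈ S, Reaches Es s v)

/-- χ(S,E): the number of influenced voters. -/
def chi {V : Type*} [Fintype V] (Es : Set (V × V)) (S : Set V) : ℕ :=
  (influenced Es S).card

/-- The tie-breaking constant ε = 1/(1 + max_{v,i} π_v(i)). -/
def eps {V : Type*} [Fintype V] {k : ℕ} (π : V → Fin k → ℕ) : ℚ :=
  1 / (1 + ((Finset.univ.sup fun v => Finset.univ.sup fun i => π v i : ℕ) : ℚ))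

/-- The final score π*_v(i) = (1-ε)·π_v(i) + Σ_{s ∈ S, v reachable from s} m_s(i). -/
def finalScore {V : Type*} [Fintype V] {k : ℕ} (Es : Set (V × V)) (π : V → Fin k → ℕ)
    (S : Set V) (m : V → Fin k → ℤ) (v : V) (i : Fin k) : ℚ :=
  (1 - eps π) * (π v i : ℚ) +
    ∑ s ∈ Finset.univ.filter (fun s => s ∈ S ∧ Reaches Es s v), (m s i : ℚ)

/-- V_c: voters whose initial score vector has a strict maximum at `c`. -/
def initVoters {V : Type*} [Fintype V] {k : ℕ} (π : V → Fin k → ℕ) (c : Fin k) : Finset V :=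
  Finset.univ.filter (fun v => ∀ j, j ≠ c → π v j < π v c)

/-- V*_c: voters whose final score vector has a strict maximum at `c`. -/
def finalVoters {V : Type*} [Fintype V] {k : ℕ} (Es : Set (V × V)) (π : V → Fin k → ℕ)
    (S : Set V) (m : V → Fin k → ℤ) (c : Fin k) : Finset V :=
  Finset.univ.filter (fun v => ∀ j, j ≠ c →
    finalScore Es π S m v j < finalScore Es π S m v c)

/-- MoV(S,M,E) = |V*_{c_0}| − max_{c ≠ c_0} |V*_c|. -/
def MoV {V : Type*} [Fintype V] {k : ℕ} [NeZero k] (Es : Set (V × V)) (π : V → Fin k → ℕ)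
    (S : Set V) (m : V → Fin k → ℤ) : ℤ :=
  ((finalVoters Es π S m 0).card : ℤ) -
    (((Finset.univ.erase (0 : Fin k)).sup fun c => (finalVoters Es π S m c).card : ℕ) : ℤ)

/-- |M|: the total budget used by seed set `S` with messages `m`. -/
def totalBudget {V : Type*} [Fintype V] {k : ℕ} (S : Set V) (m : V → Fin k → ℤ) : ℕ :=
  ∑ s ∈ Finset.univ.filter (fun s => s ∈ S), ∑ i, (m s i).natAbs

end

/-!
Adding edges only lets more seeds reach a voter, and every seed's message weakly raises the margin
`π*_v(0) - π*_v(1)`; so the margin of every voter weakly increases. Hence the set `V*_{c_0}` of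
voters with positive margin grows and the set `V*_{c_1}` of voters with negative margin shrinks,
and with two candidates `MoV = |V*_{c_0}| - |V*_{c_1}|`.
-/

theorem Reaches.mono {V : Type*} {E₁ E₂ : Set (V × V)} (h : E₁ ⊆ E₂) {s v : V}
    (hr : Reaches E₁ s v) : Reaches E₂ s v :=
  Relation.ReflTransGen.mono (fun _ _ hab => h hab) s v hr

section EdgeMonotonicity

variable {V : Type*} [Fintype V] {k : ℕ} {E₁ E₂ : Set (V × V)} {π : V → Fin k → ℕ}
  {S : Set V} {m : V → Fin k → ℤ}

theorem filter_reaches_subset (h : E₁ ⊆ E₂) (v : V) :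
    Finset.univ.filter (fun s => s ∈ S ∧ Reaches E₁ s v) ⊆
      Finset.univ.filter (fun s => s ∈ S ∧ Reaches E₂ s v) :=
  Finset.monotone_filter_right _ fun _ _ hs => ⟨hs.1, hs.2.mono h⟩

theorem finalScore_mono_of_nonneg (h : E₁ ⊆ E₂) {i : Fin k} (hm : ∀ s ∈ S, 0 ≤ m s i) (v : V) :
    finalScore E₁ π S m v i ≤ finalScore E₂ π S m v i := by
  unfold finalScore
  refine add_le_add le_rfl (Finset.sum_le_sum_of_subset_of_nonneg (filter_reaches_subset h v) ?_)
  intro s hs _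
  exact_mod_cast hm s (Finset.mem_filter.mp hs).2.1

theorem finalScore_anti_of_nonpos (h : E₁ ⊆ E₂) {i : Fin k} (hm : ∀ s ∈ S, m s i ≤ 0) (v : V) :
    finalScore E₂ π S m v i ≤ finalScore E₁ π S m v i := by
  unfold finalScore
  refine add_le_add le_rfl (Finset.sum_le_sum_of_subset_of_nonpos' (filter_reaches_subset h v) ?_)
  intro s hs _
  exact_mod_cast hm s (Finset.mem_filter.mp hs).2.1

theorem finalVoters_mono (h : E₁ ⊆ E₂) {c : Fin k} (hc : ∀ s ∈ S, 0 ≤ m s c)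
    (hother : ∀ s ∈ S, ∀ j ≠ c, m s j ≤ 0) :
    finalVoters E₁ π S m c ⊆ finalVoters E₂ π S m c :=
  Finset.monotone_filter_right _ fun v _ hv j hj =>
    calc finalScore E₂ π S m v j
        ≤ finalScore E₁ π S m v j :=
          finalScore_anti_of_nonpos h (fun s hs => hother s hs j hj) v
      _ < finalScore E₁ π S m v c := hv j hj
      _ ≤ finalScore E₂ π S m v c := finalScore_mono_of_nonneg h hc v

theorem finalVoters_anti (h : E₁ ⊆ E₂) {c : Fin k} (hc : ∀ s ∈ S, m s c ≤ 0)
    (hother : ∀ s ∈ S, ∀ j ≠ c, 0 ≤ m s j) :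
    finalVoters E₂ π S m c ⊆ finalVoters E₁ π S m c :=
  Finset.monotone_filter_right _ fun v _ hv j hj =>
    calc finalScore E₁ π S m v j
        ≤ finalScore E₂ π S m v j :=
          finalScore_mono_of_nonneg h (fun s hs => hother s hs j hj) v
      _ < finalScore E₂ π S m v c := hv j hj
      _ ≤ finalScore E₁ π S m v c := finalScore_anti_of_nonpos h hc v

end EdgeMonotonicity

section TwoCandidates

variable {V : Type*} [Fintype V] {E₁ E₂ : Set (V × V)} {π : V → Fin 2 → ℕ}
  {S : Set V} {m : V → Fin 2 → ℤ}

theorem MoV_fin_two (Es : Set (V × V)) :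
    MoV Es π S m = (finalVoters Es π S m 0).card - (finalVoters Es π S m 1).card := by
  rw [MoV, show Finset.univ.erase (0 : Fin 2) = {1} by decide, Finset.sup_singleton]

theorem MoV_mono_of_favorable (h : E₁ ⊆ E₂) (hm : ∀ s ∈ S, 0 ≤ m s 0 ∧ m s 1 ≤ 0) :
    MoV E₁ π S m ≤ MoV E₂ π S m := by
  have hother0 : ∀ s ∈ S, ∀ j ≠ (0 : Fin 2), m s j ≤ 0 := by
    intro s hs j hj
    rw [Fin.eq_one_of_ne_zero j hj]
    exact (hm s hs).2
  have hother1 : ∀ s ∈ S, ∀ j ≠ (1 : Fin 2), 0 ≤ m s j := by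
    intro s hs j hj
    rw [show j = 0 by omega]
    exact (hm s hs).1
  have h0 := Finset.card_le_card (finalVoters_mono (π := π) h (fun s hs => (hm s hs).1) hother0)
  have h1 := Finset.card_le_card (finalVoters_anti (π := π) h (fun s hs => (hm s hs).2) hother1)
  rw [MoV_fin_two, MoV_fin_two]
  omega

end TwoCandidates

theorem edge_addition_monotone_two_candidates_general {V : Type*} [Fintype V]
    (Es : Set (V × V)) (π : V → Fin 2 → ℕ)
    (S : Set V) (m : V → Fin 2 → ℤ)
    (hm : ∀ s ∈ S, 0 ≤ m s 0 ∧ m s 1 ≤ 0) :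
    (∀ F1 F2 : Set (V × V), F1 ⊆ F2 →
        MoV (Es ∪ F1) π S m ≤ MoV (Es ∪ F2) π S m) ∧
    (∀ E' : Set (V × V),
        MoV (Es ∪ E') π S m - MoV Es π S m ≤
          MoV (Es ∪ (Set.univ \ Es)) π S m - MoV Es π S m) := by
  refine ⟨fun F1 F2 hF => MoV_mono_of_favorable (Set.union_subset_union_right Es hF) hm,
    fun E' => ?_⟩
  have hE' : Es ∪ E' ⊆ Es ∪ (Set.univ \ Es) := by
    rw [Set.union_sdiff_cancel (Set.subset_univ Es)]
    exact Set.subset_univ _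
  linarith [MoV_mono_of_favorable (π := π) hE' hm]

/-- With two candidates and every seed's message weakly favorable to c₀, MoV is monotone in
the added edge set; in particular adding all possible edges maximizes ΔMoV⁺. -/
theorem edge_addition_monotone_two_candidates {V : Type*} [Fintype V]
    (Es : Set (V × V)) (π : V → Fin 2 → ℕ)
    (hinj : ∀ v : V, π v 0 ≠ π v 1)
    (S : Set V) (m : V → Fin 2 → ℤ)
    (hm : ∀ s ∈ S, 0 ≤ m s 0 ∧ m s 1 ≤ 0) :
    (∀ F1 F2 : Set (V × V), F1 ⊆ F2 →
        MoV (Es ∪ F1) π S m ≤ MoV (Es ∪ F2) π S m) ∧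
    (∀ E' : Set (V × V),
        MoV (Es ∪ E') π S m - MoV Es π S m ≤
          MoV (Es ∪ (Set.univ \ Es)) π S m - MoV Es π S m) :=
  edge_addition_monotone_two_candidates_general Es π S m hm
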